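/- Let n ≥ 5 be odd, let u, v be vertices of the regular tournament T_reg on n vertices with u ≻ v in T_reg, and let T_reg^{u,v} be the tournament obtained from T_reg by reversing the edge between u and v (so that v ≻ u). Then u does not belong to the Slater set of T_reg^{u,v}. -/

import Mathlib

open scoped Classical

variable {V : Type*}

/-- A tournament: an irreflexive relation such that for distinct `u, v`
exactly one of `r u v` and `r v u` holds. -/
def IsTournament (r : V → V → Prop) : Prop :=
  (∀ v, ¬ r v v) ∧ ∀ u v : V, u ≠ v → (r u v ↔ ¬ r v u)

/-- The regular tournament on `Fin n` (for odd `n`): vertex `i` dominates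
`i + k (mod n)` for every `k` with `1 ≤ k ≤ (n-1)/2` (i.e. `2 * k ≤ n - 1`). -/
def regRel (n : ℕ) [NeZero n] : Fin n → Fin n → Prop :=
  fun i j => ∃ k : ℕ, 1 ≤ k ∧ 2 * k ≤ n - 1 ∧ j = i + Fin.ofNat n k

/-- The tournament obtained from `r` by reversing the edge from `u` to `v`
(so that afterwards `v` dominates `u`). -/
def reverseEdge (r : V → V → Prop) (u v : V) : V → V → Prop :=
  fun a b => (a = v ∧ b = u) ∨ (r a b ∧ ¬(a = u ∧ b = v))

/-- The Slater score of a strict order `s` w.r.t. the dominance relation `r`. -/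
noncomputable def slaterScore (r s : V → V → Prop) : ℕ :=
  {p : V × V | s p.1 p.2 ∧ r p.1 p.2}.ncard

/-- `s` is a Slater order for the tournament `r`: a strict total order of maximum Slater score. -/
def IsSlaterOrder (r s : V → V → Prop) : Prop :=
  IsStrictTotalOrder V s ∧
    ∀ s' : V → V → Prop, IsStrictTotalOrder V s' → slaterScore r s' ≤ slaterScore r s

/-- The Slater set: maximum elements of Slater orders. -/
def slaterSet (r : V → V → Prop) : Set V :=
  {m | ∃ s : V → V → Prop, IsSlaterOrder r s ∧ ∀ x, x ≠ m → s m x}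

/-!
If `u` is the maximum of a Slater order, moving `u` to the bottom trades the `u`-pairs
`u ≻ y` for the pairs `x ≻ u`, so a Slater winner must have out-degree at least its in-degree.
In `T_reg` every vertex has equal in- and out-degree (the reflection `y ↦ 2u - y` swaps them),
so after reversing `u ≻ v` the vertex `u` has in-degree two more than its out-degree.
-/

section SlaterScore

variable (r s : V → V → Prop) (u : V)

noncomputable def slaterScoreAway : ℕ :=
  {p : V × V | p.1 ≠ u ∧ p.2 ≠ u ∧ s p.1 p.2 ∧ r p.1 p.2}.ncard

def moveToBottom : V → V → Prop :=
  fun a b => a ≠ u ∧ (b = u ∨ s a b)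

variable {r s u}

lemma slaterScore_eq_of_isTop [Finite V] [Std.Asymm s] (hr : ∀ x, ¬ r x x)
    (htop : ∀ x, x ≠ u → s u x) :
    slaterScore r s = slaterScoreAway r s u + {y | r u y}.ncard := by
  have hsplit : {p : V × V | s p.1 p.2 ∧ r p.1 p.2} =
      {p : V × V | p.1 ≠ u ∧ p.2 ≠ u ∧ s p.1 p.2 ∧ r p.1 p.2} ∪
        Prod.mk u '' {y | r u y} := by
    ext ⟨a, b⟩
    simp only [Set.mem_ofPred_eq, Set.mem_union, Set.mem_image, Prod.mk.injEq]
    constructor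
    · rintro ⟨hs, hr⟩
      by_cases ha : a = u
      · exact Or.inr ⟨b, ha ▸ hr, ha.symm, rfl⟩
      · have hb : b ≠ u := by
          rintro rfl
          exact asymm hs (htop a ha)
        exact Or.inl ⟨ha, hb, hs, hr⟩
    · rintro (⟨-, -, hab⟩ | ⟨y, hy, rfl, rfl⟩)
      · exact hab
      · exact ⟨htop y fun h => hr u (h ▸ hy), hy⟩
  have hdisj : Disjoint {p : V × V | p.1 ≠ u ∧ p.2 ≠ u ∧ s p.1 p.2 ∧ r p.1 p.2}
      (Prod.mk u '' {y | r u y}) := by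
    rw [Set.disjoint_left]
    rintro _ ⟨ha, -⟩ ⟨y, -, rfl⟩
    exact ha rfl
  rw [slaterScore, hsplit, Set.ncard_union_eq hdisj,
    Set.ncard_image_of_injective _ (Prod.mk_right_injective u)]
  rfl

lemma slaterScoreAway_moveToBottom :
    slaterScoreAway r (moveToBottom s u) u = slaterScoreAway r s u := by
  unfold slaterScoreAway moveToBottom
  congr 1
  ext ⟨a, b⟩
  simp only [Set.mem_ofPred_eq]
  constructor
  · rintro ⟨ha, hb, ⟨-, hb' | hs⟩, hr⟩
    · exact absurd hb' hb
    · exact ⟨ha, hb, hs, hr⟩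
  · rintro ⟨ha, hb, hs, hr⟩
    exact ⟨ha, hb, ⟨ha, Or.inr hs⟩, hr⟩

lemma slaterScore_moveToBottom [Finite V] (hr : ∀ x, ¬ r x x) :
    slaterScore r (moveToBottom s u) = slaterScoreAway r s u + {x | r x u}.ncard := by
  have hsplit : {p : V × V | moveToBottom s u p.1 p.2 ∧ r p.1 p.2} =
      {p : V × V | p.1 ≠ u ∧ p.2 ≠ u ∧ moveToBottom s u p.1 p.2 ∧ r p.1 p.2} ∪
        (fun x => (x, u)) '' {x | r x u} := by
    ext ⟨a, b⟩
    simp only [moveToBottom, Set.mem_ofPred_eq, Set.mem_union, Set.mem_image, Prod.mk.injEq]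
    constructor
    · rintro ⟨⟨ha, hbs⟩, hr⟩
      by_cases hb : b = u
      · exact Or.inr ⟨a, hb ▸ hr, rfl, hb.symm⟩
      · exact Or.inl ⟨ha, hb, ⟨ha, hbs⟩, hr⟩
    · rintro (⟨-, -, hab⟩ | ⟨x, hx, rfl, rfl⟩)
      · exact hab
      · exact ⟨⟨fun h => hr u (h ▸ hx), Or.inl rfl⟩, hx⟩
  have hdisj :
      Disjoint {p : V × V | p.1 ≠ u ∧ p.2 ≠ u ∧ moveToBottom s u p.1 p.2 ∧ r p.1 p.2}
      ((fun x => (x, u)) '' {x | r x u}) := by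
    rw [Set.disjoint_left]
    rintro _ ⟨-, hb, -⟩ ⟨x, -, rfl⟩
    exact hb rfl
  rw [slaterScore, hsplit, Set.ncard_union_eq hdisj,
    Set.ncard_image_of_injective _ (Prod.mk_left_injective u)]
  exact congrArg (· + _) slaterScoreAway_moveToBottom

end SlaterScore

lemma isStrictTotalOrder_moveToBottom {s : V → V → Prop} [IsStrictTotalOrder V s] (u : V) :
    IsStrictTotalOrder V (moveToBottom s u) where
  irrefl a := fun ⟨ha, h⟩ => h.elim ha (irrefl a)
  trans a b c := fun ⟨ha, hab⟩ ⟨hb, hbc⟩ =>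
    ⟨ha, hbc.imp_right (_root_.trans (hab.resolve_left hb))⟩
  trichotomous a b hab hba := by
    by_cases ha : a = u <;> by_cases hb : b = u
    · exact ha.trans hb.symm
    · exact absurd ⟨hb, Or.inl ha⟩ hba
    · exact absurd ⟨ha, Or.inl hb⟩ hab
    · exact Std.Trichotomous.trichotomous (r := s) a b (fun h => hab ⟨ha, Or.inr h⟩)
        (fun h => hba ⟨hb, Or.inr h⟩)

theorem ncard_in_le_ncard_out_of_mem_slaterSet [Finite V] {r : V → V → Prop}
    (hr : ∀ x, ¬ r x x) {u : V} (hu : u ∈ slaterSet r) :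
    {x | r x u}.ncard ≤ {y | r u y}.ncard := by
  obtain ⟨s, ⟨hs, hmax⟩, htop⟩ := hu
  have := hs
  have hle := hmax _ (isStrictTotalOrder_moveToBottom (s := s) u)
  rw [slaterScore_moveToBottom hr, slaterScore_eq_of_isTop hr htop] at hle
  exact Nat.le_of_add_le_add_left hle

section ReverseEdge

variable {r : V → V → Prop} {u v : V}

lemma reverseEdge_irrefl (hr : ∀ x, ¬ r x x) (huv : u ≠ v) (x : V) :
    ¬ reverseEdge r u v x x := by
  rintro (⟨rfl, rfl⟩ | ⟨hx, -⟩)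
  exacts [huv rfl, hr x hx]

lemma setOf_reverseEdge_left (huv : u ≠ v) :
    {y | reverseEdge r u v u y} = {y | r u y} \ {v} := by
  ext y
  simp [reverseEdge, huv]

lemma setOf_reverseEdge_right (huv : u ≠ v) :
    {x | reverseEdge r u v x u} = insert v {x | r x u} := by
  ext x
  simp [reverseEdge, huv]

end ReverseEdge

section RegRel

variable {n : ℕ} [NeZero n]

lemma regRel_irrefl (i : Fin n) : ¬ regRel n i i := by
  rintro ⟨k, hk1, hk2, hk⟩
  have hk0 : (Fin.ofNat n k).val = 0 := by
    rw [left_eq_add] at hk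
    rw [hk, Fin.val_zero]
  rw [Fin.val_ofNat, Nat.mod_eq_of_lt (by omega)] at hk0
  omega

lemma regRel_reflect (u y : Fin n) : regRel n (u + u - y) u ↔ regRel n u y := by
  constructor <;> rintro ⟨k, hk1, hk2, hk⟩ <;> exact ⟨k, hk1, hk2, by grind⟩

lemma ncard_setOf_regRel_in_eq_out (u : Fin n) :
    {x | regRel n x u}.ncard = {y | regRel n u y}.ncard := by
  have himage : {x | regRel n x u} = Equiv.subLeft (u + u) '' {y | regRel n u y} := by
    ext x
    have hx := regRel_reflect u (u + u - x)
    rw [sub_sub_cancel] at hx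
    rw [Equiv.image_eq_preimage_symm, Equiv.symm_subLeft]
    exact hx
  rw [himage, Set.ncard_image_of_injective _ (Equiv.injective _)]

end RegRel

theorem slater_reversed_regular_general (n : ℕ) [NeZero n]
    (u v : Fin n) (huv : regRel n u v) :
    u ∉ slaterSet (reverseEdge (regRel n) u v) := by
  intro hu
  have hne : u ≠ v := by
    rintro rfl
    exact regRel_irrefl u huv
  have hle := ncard_in_le_ncard_out_of_mem_slaterSet (reverseEdge_irrefl regRel_irrefl hne) hu
  rw [setOf_reverseEdge_left hne, setOf_reverseEdge_right hne,
    Set.ncard_sdiff_singleton_of_mem (s := {y | regRel n u y}) huv] at hle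
  have hin := Set.ncard_le_ncard_insert v {x | regRel n x u}
  have hout : 0 < {y | regRel n u y}.ncard := (Set.ncard_pos).mpr ⟨v, huv⟩
  rw [ncard_setOf_regRel_in_eq_out] at hin
  omega

/-- for odd `n ≥ 5`, if the edge from `u` to `v` of the regular
tournament is reversed, then `u` is not in the Slater set of the resulting tournament. -/
theorem slater_reversed_regular (n : ℕ) [NeZero n] (hodd : Odd n) (hn : 5 ≤ n)
    (u v : Fin n) (huv : regRel n u v) :
    u ∉ slaterSet (reverseEdge (regRel n) u v) :=
  slater_reversed_regular_general n u v huv
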